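/- arXiv:1505.07102 — 4 statements merged into one kernel-verified Lean document; each statement's English description precedes it below -/
import Mathlib

section
/- Let c : ℝ[X] →ₗ[ℝ] ℝ be a linear functional on real polynomials and write c_i = c(X^i). Let k ≥ 1 and suppose the k×k Hankel matrix H with entries H(i,j) = c_{i+j+1} (for i, j ∈ Fin k) has nonzero determinant. Then there exists a unique real polynomial P of degree at most k such that P(0) = 1 and c(X^i · P) = 0 for all i < k. -/
/-!
Write `P = b + ∑_{j<k} a_j X^{j+1}`. By linearity, `c(X^i P) = b c_i + ∑_j c_{i+j+1} a_j`, so the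
orthogonality conditions on `P` say exactly that `H a = -b (c_0, …, c_{k-1})`. With `b = P(0) = 1`
and `H` invertible, this linear system has exactly one solution `a`, hence exactly one `P`.
-/

open Matrix Polynomial Finset

variable {R : Type*} [CommRing R]

namespace Polynomial

theorem eq_C_add_sum_fin_of_natDegree_le {P : R[X]} {k : ℕ} (hP : P.natDegree ≤ k) :
    P = C (P.coeff 0) + ∑ j : Fin k, C (P.coeff (j + 1)) * X ^ ((j : ℕ) + 1) := by
  conv_lhs => rw [P.as_sum_range_C_mul_X_pow' (Nat.lt_succ_of_le hP), sum_range_succ']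
  rw [Fin.sum_univ_eq_sum_range (fun j => C (P.coeff (j + 1)) * X ^ (j + 1)), pow_zero, mul_one,
    add_comm]

theorem natDegree_C_add_sum_fin_le (b : R) {k : ℕ} (a : Fin k → R) :
    (C b + ∑ j : Fin k, C (a j) * X ^ ((j : ℕ) + 1)).natDegree ≤ k := by
  refine (natDegree_add_le _ _).trans (max_le ((natDegree_C b).trans_le k.zero_le) ?_)
  exact natDegree_sum_le_of_forall_le _ _ fun j _ => (natDegree_C_mul_X_pow_le _ _).trans j.isLt

end Polynomial

/-- Its determinant is the Hankel determinant `H_k^{(1)}`. -/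
noncomputable def shiftedHankel (c : R[X] →ₗ[R] R) (k : ℕ) : Matrix (Fin k) (Fin k) R :=
  Matrix.of fun i j => c (X ^ ((i : ℕ) + j + 1))

section

variable (c : R[X] →ₗ[R] R) {k : ℕ} (b : R) (a : Fin k → R)

theorem map_X_pow_mul_C_add_sum (i : Fin k) :
    c (X ^ (i : ℕ) * (C b + ∑ j : Fin k, C (a j) * X ^ ((j : ℕ) + 1))) =
      b * c (X ^ (i : ℕ)) + (shiftedHankel c k *ᵥ a) i := by
  have hmonomial (r : R) (n : ℕ) : X ^ (i : ℕ) * (C r * X ^ n) = r • X ^ ((i : ℕ) + n) := by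
    rw [smul_eq_C_mul, pow_add]; ring
  simp only [mul_add, mul_sum, map_add, map_sum, mulVec, dotProduct, shiftedHankel, of_apply]
  congr 1
  · rw [mul_comm, ← smul_eq_C_mul, map_smul, smul_eq_mul]
  · refine sum_congr rfl fun j _ => ?_
    rw [hmonomial, map_smul, smul_eq_mul, mul_comm, add_assoc]

theorem forall_map_X_pow_mul_C_add_sum_eq_zero_iff :
    (∀ i < k, c (X ^ i * (C b + ∑ j : Fin k, C (a j) * X ^ ((j : ℕ) + 1))) = 0) ↔
      shiftedHankel c k *ᵥ a = -(b • fun i : Fin k => c (X ^ (i : ℕ))) := by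
  simp only [eq_neg_iff_add_eq_zero, funext_iff, Fin.forall_iff, Pi.add_apply, Pi.smul_apply,
    smul_eq_mul, Pi.zero_apply]
  refine forall₂_congr fun i hi => ?_
  rw [map_X_pow_mul_C_add_sum c b a ⟨i, hi⟩, add_comm]

end

theorem stmt_3_general (c : ℝ[X] →ₗ[ℝ] ℝ) (k : ℕ)
    (H : Matrix (Fin k) (Fin k) ℝ)
    (hH : ∀ i j : Fin k, H i j = c (Polynomial.X ^ ((i : ℕ) + (j : ℕ) + 1)))
    (hdet : H.det ≠ 0) :
    ∃! P : ℝ[X], P.natDegree ≤ k ∧ P.eval 0 = 1 ∧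
      ∀ i < k, c (Polynomial.X ^ i * P) = 0 := by
  obtain rfl : H = shiftedHankel c k := Matrix.ext hH
  have hunit : IsUnit (shiftedHankel c k) := (isUnit_iff_isUnit_det _).2 hdet.isUnit
  have hbij : Function.Bijective (shiftedHankel c k).mulVec :=
    ⟨mulVec_injective_of_isUnit hunit, mulVec_surjective_iff_isUnit.2 hunit⟩
  obtain ⟨a, ha, ha_unique⟩ := hbij.existsUnique (-((1 : ℝ) • fun i : Fin k => c (X ^ (i : ℕ))))
  refine ⟨C 1 + ∑ j : Fin k, C (a j) * X ^ ((j : ℕ) + 1),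
    ⟨natDegree_C_add_sum_fin_le 1 a, by simp [eval_finsetSum],
      (forall_map_X_pow_mul_C_add_sum_eq_zero_iff c 1 a).2 ha⟩, ?_⟩
  rintro Q ⟨hQdeg, hQ0, hQorth⟩
  rw [← coeff_zero_eq_eval_zero] at hQ0
  rw [eq_C_add_sum_fin_of_natDegree_le hQdeg, hQ0] at hQorth ⊢
  rw [← ha_unique _ ((forall_map_X_pow_mul_C_add_sum_eq_zero_iff c 1 _).1 hQorth)]

theorem stmt_3 (c : ℝ[X] →ₗ[ℝ] ℝ) (k : ℕ) (hk : 1 ≤ k)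
    (H : Matrix (Fin k) (Fin k) ℝ)
    (hH : ∀ i j : Fin k, H i j = c (Polynomial.X ^ ((i : ℕ) + (j : ℕ) + 1)))
    (hdet : H.det ≠ 0) :
    ∃! P : ℝ[X], P.natDegree ≤ k ∧ P.eval 0 = 1 ∧
      ∀ i < k, c (Polynomial.X ^ i * P) = 0 :=
  stmt_3_general c k H hH hdet
end

section
/- Let c : ℝ[X] →ₗ[ℝ] ℝ be a linear functional on real polynomials, let k ≥ 6 be a natural number, and let P, Q, R be real polynomials satisfying the orthogonality conditions c(X^i · P) = 0 for all i < k, c(X^i · Q) = 0 for all i < k-2, and c(X^i · R) = 0 for all i < k-3. Suppose c(X^{k-3} · R) ≠ 0, A_k ≠ 0, and P(X) = A_k·((X² + B_k X + C_k)·Q(X) + (D_k X³ + E_k X² + F_k X + G_k)·R(X)). Then D_k = 0 and E_k = 0. -/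
open Polynomial

theorem stmt_7 (c : ℝ[X] →ₗ[ℝ] ℝ) (k : ℕ) (hk : 6 ≤ k)
    (P Q R : ℝ[X])
    (hP : ∀ i < k, c (Polynomial.X ^ i * P) = 0)
    (hQ : ∀ i < k - 2, c (Polynomial.X ^ i * Q) = 0)
    (hR : ∀ i < k - 3, c (Polynomial.X ^ i * R) = 0)
    (hRk : c (Polynomial.X ^ (k - 3) * R) ≠ 0)
    (Ak Bk Ck Dk Ek Fk Gk : ℝ) (hAk : Ak ≠ 0)
    (hrec : P = Polynomial.C Ak *
      ((Polynomial.X ^ 2 + Polynomial.C Bk * Polynomial.X + Polynomial.C Ck) * Q +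
       (Polynomial.C Dk * Polynomial.X ^ 3 + Polynomial.C Ek * Polynomial.X ^ 2 +
        Polynomial.C Fk * Polynomial.X + Polynomial.C Gk) * R)) :
    Dk = 0 ∧ Ek = 0 := by
  obtain ⟨m, rfl⟩ : ∃ m, k = m + 6 := ⟨k - 6, by omega⟩
  simp only [show m + 6 - 2 = m + 4 from rfl, show m + 6 - 3 = m + 3 from rfl] at hQ hR hRk
  subst hrec
  have e1 : (X : ℝ[X]) ^ m * (C Ak *
      ((X ^ 2 + C Bk * X + C Ck) * Q +
       (C Dk * X ^ 3 + C Ek * X ^ 2 + C Fk * X + C Gk) * R)) =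
      Ak • (X ^ (m + 2) * Q) + (Ak * Bk) • (X ^ (m + 1) * Q) + (Ak * Ck) • (X ^ m * Q) +
      (Ak * Dk) • (X ^ (m + 3) * R) + (Ak * Ek) • (X ^ (m + 2) * R) +
      (Ak * Fk) • (X ^ (m + 1) * R) + (Ak * Gk) • (X ^ m * R) := by
    simp only [smul_eq_C_mul, map_mul]
    ring
  have e2 : (X : ℝ[X]) ^ (m + 1) * (C Ak *
      ((X ^ 2 + C Bk * X + C Ck) * Q +
       (C Dk * X ^ 3 + C Ek * X ^ 2 + C Fk * X + C Gk) * R)) =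
      Ak • (X ^ (m + 3) * Q) + (Ak * Bk) • (X ^ (m + 2) * Q) + (Ak * Ck) • (X ^ (m + 1) * Q) +
      (Ak * Dk) • (X ^ (m + 4) * R) + (Ak * Ek) • (X ^ (m + 3) * R) +
      (Ak * Fk) • (X ^ (m + 2) * R) + (Ak * Gk) • (X ^ (m + 1) * R) := by
    simp only [smul_eq_C_mul, map_mul]
    ring
  have h1 := hP m (by omega)
  have h2 := hP (m + 1) (by omega)
  rw [e1] at h1
  rw [e2] at h2
  simp only [map_add, map_smul, smul_eq_mul,
    hQ m (by omega), hQ (m + 1) (by omega), hQ (m + 2) (by omega), hQ (m + 3) (by omega),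
    hR m (by omega), hR (m + 1) (by omega), hR (m + 2) (by omega),
    mul_zero, add_zero, zero_add] at h1 h2
  have hD : Dk = 0 := by
    rcases mul_eq_zero.1 h1 with h | h
    · exact (mul_eq_zero.1 h).resolve_left hAk
    · exact absurd h hRk
  subst hD
  simp only [mul_zero, zero_mul, zero_add] at h2
  rcases mul_eq_zero.1 h2 with h | h
  · exact ⟨rfl, (mul_eq_zero.1 h).resolve_left hAk⟩
  · exact absurd h hRk
end

section
/- Let c : ℝ[X] →ₗ[ℝ] ℝ be a linear functional on real polynomials, let k ≥ 4 be a natural number, and let P, Q, R be real polynomials satisfying the orthogonality conditions c(X^i · P) = 0 for all i < k, c(X^i · Q) = 0 for all i < k-2, and c(X^i · R) = 0 for all i < k-3. Suppose c(X^{k-3} · R) ≠ 0, A_k ≠ 0, and P(X) = A_k·((X² + B_k X + C_k)·Q(X) + (F_k X + G_k)·R(X)). Then F_k = - c(X^{k-2} · Q) / c(X^{k-3} · R). -/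
open Polynomial

theorem stmt_8 (c : ℝ[X] →ₗ[ℝ] ℝ) (k : ℕ) (hk : 4 ≤ k)
    (P Q R : ℝ[X])
    (hP : ∀ i < k, c (Polynomial.X ^ i * P) = 0)
    (hQ : ∀ i < k - 2, c (Polynomial.X ^ i * Q) = 0)
    (hR : ∀ i < k - 3, c (Polynomial.X ^ i * R) = 0)
    (hRk : c (Polynomial.X ^ (k - 3) * R) ≠ 0)
    (Ak Bk Ck Fk Gk : ℝ) (hAk : Ak ≠ 0)
    (hrec : P = Polynomial.C Ak *
      ((Polynomial.X ^ 2 + Polynomial.C Bk * Polynomial.X + Polynomial.C Ck) * Q +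
       (Polynomial.C Fk * Polynomial.X + Polynomial.C Gk) * R)) :
    Fk = - c (Polynomial.X ^ (k - 2) * Q) / c (Polynomial.X ^ (k - 3) * R) := by
  obtain ⟨m, rfl⟩ : ∃ m, k = m + 4 := ⟨k - 4, by omega⟩
  have e2 : m + 4 - 2 = m + 2 := by omega
  have e3 : m + 4 - 3 = m + 1 := by omega
  rw [e2, e3] at *
  have h0 := hP m (by omega)
  have hQ1 := hQ m (by omega)
  have hQ2 := hQ (m+1) (by omega)
  have hR0 := hR m (by omega)
  have expand : (X:ℝ[X])^m * P =
      C Ak * (X^(m+2)*Q) + C (Ak*Bk) * (X^(m+1)*Q) + C (Ak*Ck) * (X^m*Q)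
      + C (Ak*Fk) * (X^(m+1)*R) + C (Ak*Gk) * (X^m*R) := by
    rw [hrec]; simp only [C_mul]; ring
  rw [expand] at h0
  simp only [← smul_eq_C_mul, map_add, map_smul, smul_eq_mul] at h0
  rw [hQ1, hQ2, hR0] at h0
  have hkey : Ak * (c (X^(m+2)*Q) + Fk * c (X^(m+1)*R)) = 0 := by linear_combination h0
  have := mul_eq_zero.mp hkey |>.resolve_left hAk
  rw [eq_div_iff (show c (X^(m+1)*R) ≠ 0 from hRk)]
  linarith
end

section
/- Let c : ℝ[X] →ₗ[ℝ] ℝ be a linear functional on real polynomials, let k ≥ 3 be a natural number, and let P, Q, R be real polynomials satisfying c(X^i · P) = 0 for all i < k, c(X^i · Q) = 0 for all i < k-2, and c(X^i · R) = 0 for all i < k-3. Suppose A_k ≠ 0 and P(X) = A_k·((X² + B_k X + C_k)·Q(X) + (F_k X + G_k)·R(X)). Set a₁₁ = c(X^{k-2}·Q), a₁₃ = c(X^{k-3}·R), a₂₁ = c(X^{k-1}·Q), a₂₂ = a₁₁, a₂₃ = c(X^{k-2}·R), a₃₁ = c(X^k·Q), a₃₂ = a₂₁, a₃₃ = c(X^{k-1}·R),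 s = c(X^{k+1}·Q), t = c(X^k·R), b₁ = -a₂₁ - F_k·a₂₃, b₂ = -a₃₁ - F_k·a₃₃, b₃ = -s - F_k·t. Then the coefficients B_k, C_k, G_k satisfy the linear system: a₁₁·B_k + a₁₃·G_k = b₁, a₂₁·B_k + a₂₂·C_k + a₂₃·G_k = b₂, and a₃₁·B_k + a₃₂·C_k + a₃₃·G_k = b₃. -/
open Polynomial

theorem stmt_9 (c : ℝ[X] →ₗ[ℝ] ℝ) (k : ℕ) (hk : 3 ≤ k)
    (P Q R : ℝ[X])
    (hP : ∀ i < k, c (Polynomial.X ^ i * P) = 0)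
    (hQ : ∀ i < k - 2, c (Polynomial.X ^ i * Q) = 0)
    (hR : ∀ i < k - 3, c (Polynomial.X ^ i * R) = 0)
    (Ak Bk Ck Fk Gk : ℝ) (hAk : Ak ≠ 0)
    (hrec : P = Polynomial.C Ak *
      ((Polynomial.X ^ 2 + Polynomial.C Bk * Polynomial.X + Polynomial.C Ck) * Q +
       (Polynomial.C Fk * Polynomial.X + Polynomial.C Gk) * R))
    (a11 a13 a21 a22 a23 a31 a32 a33 s t b1 b2 b3 : ℝ)
    (ha11 : a11 = c (Polynomial.X ^ (k - 2) * Q))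
    (ha13 : a13 = c (Polynomial.X ^ (k - 3) * R))
    (ha21 : a21 = c (Polynomial.X ^ (k - 1) * Q))
    (ha22 : a22 = a11)
    (ha23 : a23 = c (Polynomial.X ^ (k - 2) * R))
    (ha31 : a31 = c (Polynomial.X ^ k * Q))
    (ha32 : a32 = a21)
    (ha33 : a33 = c (Polynomial.X ^ (k - 1) * R))
    (hs : s = c (Polynomial.X ^ (k + 1) * Q))
    (ht : t = c (Polynomial.X ^ k * R))
    (hb1 : b1 = -a21 - Fk * a23)
    (hb2 : b2 = -a31 - Fk * a33)
    (hb3 : b3 = -s - Fk * t) :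
    a11 * Bk + a13 * Gk = b1 ∧
    a21 * Bk + a22 * Ck + a23 * Gk = b2 ∧
    a31 * Bk + a32 * Ck + a33 * Gk = b3 := by

  have key : ∀ i : ℕ, c (Polynomial.X ^ i * P) =
      Ak * (c (Polynomial.X ^ (i+2) * Q) + Bk * c (Polynomial.X ^ (i+1) * Q)
        + Ck * c (Polynomial.X ^ i * Q) + Fk * c (Polynomial.X ^ (i+1) * R)
        + Gk * c (Polynomial.X ^ i * R)) := by
    intro i
    have hexp : Polynomial.X ^ i * P =
        Ak • (Polynomial.X ^ (i+2) * Q) + Bk • (Ak • (Polynomial.X ^ (i+1) * Q))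
        + Ck • (Ak • (Polynomial.X ^ i * Q)) + Fk • (Ak • (Polynomial.X ^ (i+1) * R))
        + Gk • (Ak • (Polynomial.X ^ i * R)) := by
      rw [hrec]
      simp only [Polynomial.smul_eq_C_mul]
      ring
    rw [hexp]
    simp only [map_add, map_smul, smul_eq_mul]
    ring
  have hQ3 : c (Polynomial.X ^ (k - 3) * Q) = 0 := hQ _ (by omega)
  have e1 := key (k - 3)
  have e2 := key (k - 2)
  have e3 := key (k - 1)
  rw [show k - 3 + 2 = k - 1 by omega, show k - 3 + 1 = k - 2 by omega] at e1
  rw [show k - 2 + 2 = k by omega, show k - 2 + 1 = k - 1 by omega] at e2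
  rw [show k - 1 + 2 = k + 1 by omega, show k - 1 + 1 = k by omega] at e3
  rw [hP _ (by omega : k - 3 < k), hQ3] at e1
  rw [hP _ (by omega : k - 2 < k)] at e2
  rw [hP _ (by omega : k - 1 < k)] at e3
  have f1 : c (Polynomial.X ^ (k-1) * Q) + Bk * c (Polynomial.X ^ (k-2) * Q)
      + Ck * 0 + Fk * c (Polynomial.X ^ (k-2) * R) + Gk * c (Polynomial.X ^ (k-3) * R) = 0 := by
    rcases mul_eq_zero.mp e1.symm with h | h
    · exact absurd h hAk
    · exact h
  have f2 : c (Polynomial.X ^ k * Q) + Bk * c (Polynomial.X ^ (k-1) * Q)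
      + Ck * c (Polynomial.X ^ (k-2) * Q) + Fk * c (Polynomial.X ^ (k-1) * R)
      + Gk * c (Polynomial.X ^ (k-2) * R) = 0 := by
    rcases mul_eq_zero.mp e2.symm with h | h
    · exact absurd h hAk
    · exact h
  have f3 : c (Polynomial.X ^ (k+1) * Q) + Bk * c (Polynomial.X ^ k * Q)
      + Ck * c (Polynomial.X ^ (k-1) * Q) + Fk * c (Polynomial.X ^ k * R)
      + Gk * c (Polynomial.X ^ (k-1) * R) = 0 := by
    rcases mul_eq_zero.mp e3.symm with h | h
    · exact absurd h hAk
    · exact h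
  subst ha11 ha13 ha21 ha23 ha31 ha33 hs ht ha22 ha32 hb1 hb2 hb3
  refine ⟨by linarith, by linarith, by linarith⟩
end
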